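/- arXiv:1903.01287 — 6 statements merged into one kernel-verified Lean document; each statement's English description precedes it below -/
import Mathlib

section
/- Let x̲, x̄ ∈ ℝⁿ with x̲ ≤ x̄. If x ∈ ℝⁿ satisfies, for every diagonal nonnegative Γ, the inequality [x;1]ᵀ P(Γ) [x;1] ≥ 0 with P(Γ) = [[-2Γ, Γ(x̲+x̄)],[(x̲+x̄)ᵀΓ, -2 x̲ᵀ Γ x̄]], then x̲ ≤ x ≤ x̄. (Converse direction: the QC over-approximation of a hyper-rectangle is exact.) -/
open Matrix

theorem hyperrect_qc_converse (n : ℕ) (xl xu x : Fin n → ℝ)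
    (hle : xl ≤ xu)
    (hqc : ∀ γ : Fin n → ℝ, (∀ i, 0 ≤ γ i) →
      let Γ : Matrix (Fin n) (Fin n) ℝ := Matrix.diagonal γ
      let P : Matrix (Fin n ⊕ Unit) (Fin n ⊕ Unit) ℝ :=
        Matrix.fromBlocks ((-2 : ℝ) • Γ)
          (Matrix.of fun i (_ : Unit) => (Γ *ᵥ (xl + xu)) i)
          (Matrix.of fun (_ : Unit) j => ((xl + xu) ᵥ* Γ) j)
          (Matrix.of fun (_ : Unit) (_ : Unit) => -2 * (xl ⬝ᵥ (Γ *ᵥ xu)))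
      let v : Fin n ⊕ Unit → ℝ := Sum.elim x (fun _ => 1)
      0 ≤ v ⬝ᵥ (P *ᵥ v)) :
    xl ≤ x ∧ x ≤ xu := by
  have key : ∀ i, xl i ≤ x i ∧ x i ≤ xu i := by
    intro i
    have h := hqc (fun j => if j = i then 1 else 0) (by intro j; positivity)
    simp only [dotProduct, Matrix.mulVec, Matrix.vecMul, Matrix.fromBlocks,
      Fintype.sum_sum_type, Matrix.diagonal, Matrix.of_apply, Sum.elim_inl, Sum.elim_inr,
      Matrix.smul_apply, Pi.add_apply, mul_add, Finset.sum_add_distrib, mul_ite, ite_mul, one_mul, mul_one, zero_mul, mul_zero,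
      Finset.sum_ite_eq, Finset.sum_ite_eq', Finset.mem_univ, if_true, smul_eq_mul,
      Finset.univ_unique, Finset.sum_singleton] at h
    have hli := hle i
    constructor <;> nlinarith [h, sq_nonneg (x i - xl i), sq_nonneg (x i - xu i)]
  exact ⟨fun i => (key i).1, fun i => (key i).2⟩
end

section
/- Let φ : ℝ → ℝ be slope-restricted in [α, β], i.e., for all x, y ∈ ℝ, (φ(x) − φ(y) − α(x − y))·(φ(x) − φ(y) − β(x − y)) ≤ 0. Define Φ : ℝⁿ → ℝⁿ by Φ(x)ᵢ = φ(xᵢ). Then for all x ∈ ℝⁿ and all nonnegative weights λᵢⱼ (1 ≤ i < j ≤ n), with T = Σ_{i<j} λᵢⱼ (eᵢ−eⱼ)(eᵢ−eⱼ)ᵀ, the inequality −2αβ·xᵀTx + 2(α+β)·xᵀTΦ(x) − 2·Φ(x)ᵀTΦ(x) ≥ 0 holds. -/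
open Matrix

lemma dot_mulVec_sum {n : ℕ} {ι : Type*} (s : Finset ι)
    (f : ι → Matrix (Fin n) (Fin n) ℝ) (a b : Fin n → ℝ) :
    a ⬝ᵥ ((∑ i ∈ s, f i) *ᵥ b) = ∑ i ∈ s, a ⬝ᵥ (f i *ᵥ b) := by
  classical
  induction s using Finset.cons_induction with
  | empty => simp [Matrix.zero_mulVec]
  | cons i s hi ih =>
    rw [Finset.sum_cons, Finset.sum_cons, Matrix.add_mulVec, dotProduct_add, ih]

lemma dot_vecMulVec {n : ℕ} (u v a b : Fin n → ℝ) :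
    a ⬝ᵥ (Matrix.vecMulVec u v *ᵥ b) = (a ⬝ᵥ u) * (v ⬝ᵥ b) := by
  simp only [dotProduct, Matrix.mulVec, Matrix.vecMulVec_apply, Finset.mul_sum,
    Finset.sum_mul]
  rw [Finset.sum_comm]
  refine Finset.sum_congr rfl fun k _ => Finset.sum_congr rfl fun l _ => by ring

lemma dot_single_sub {n : ℕ} (i j : Fin n) (a : Fin n → ℝ) :
    a ⬝ᵥ ((Pi.single i 1 : Fin n → ℝ) - Pi.single j 1) = a i - a j := by
  simp [dotProduct, Pi.single_apply, mul_sub, Finset.sum_sub_distrib, mul_comm]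

lemma single_sub_dot {n : ℕ} (i j : Fin n) (a : Fin n → ℝ) :
    ((Pi.single i 1 : Fin n → ℝ) - Pi.single j 1) ⬝ᵥ a = a i - a j := by
  simp [dotProduct, Pi.single_apply, sub_mul, Finset.sum_sub_distrib]

lemma quad_form_expand {n : ℕ} (lam : Fin n → Fin n → ℝ) (a b : Fin n → ℝ) :
    a ⬝ᵥ ((∑ i : Fin n, ∑ j : Fin n,
        if i < j then lam i j • Matrix.vecMulVec
          ((Pi.single i 1 : Fin n → ℝ) - Pi.single j 1)
          ((Pi.single i 1 : Fin n → ℝ) - Pi.single j 1) else 0) *ᵥ b)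
      = ∑ i : Fin n, ∑ j : Fin n,
        if i < j then lam i j * ((a i - a j) * (b i - b j)) else 0 := by
  rw [dot_mulVec_sum]
  refine Finset.sum_congr rfl fun i _ => ?_
  rw [dot_mulVec_sum]
  refine Finset.sum_congr rfl fun j _ => ?_
  split
  · rw [Matrix.smul_mulVec, dotProduct_smul, dot_vecMulVec,
      dot_single_sub, single_sub_dot, smul_eq_mul]
  · simp [Matrix.zero_mulVec]

theorem repeated_nonlinearity_qc (n : ℕ) (α β : ℝ) (φ : ℝ → ℝ)
    (hφ : ∀ x y : ℝ, (φ x - φ y - α * (x - y)) * (φ x - φ y - β * (x - y)) ≤ 0)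
    (lam : Fin n → Fin n → ℝ) (hlam : ∀ i j, i < j → 0 ≤ lam i j)
    (x : Fin n → ℝ) :
    let Φx : Fin n → ℝ := fun i => φ (x i)
    let e : Fin n → Fin n → ℝ := fun i => Pi.single i 1
    let T : Matrix (Fin n) (Fin n) ℝ :=
      ∑ i : Fin n, ∑ j : Fin n,
        if i < j then lam i j • Matrix.vecMulVec (e i - e j) (e i - e j) else 0
    0 ≤ -2 * α * β * (x ⬝ᵥ (T *ᵥ x)) + 2 * (α + β) * (x ⬝ᵥ (T *ᵥ Φx))
        - 2 * (Φx ⬝ᵥ (T *ᵥ Φx)) := by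
  intro Φx e T
  have h1 := quad_form_expand lam x x
  have h2 := quad_form_expand lam x Φx
  have h3 := quad_form_expand lam Φx Φx
  show 0 ≤ -2 * α * β * (x ⬝ᵥ (T *ᵥ x)) + 2 * (α + β) * (x ⬝ᵥ (T *ᵥ Φx))
        - 2 * (Φx ⬝ᵥ (T *ᵥ Φx))
  have hT : T = ∑ i : Fin n, ∑ j : Fin n,
      if i < j then lam i j • Matrix.vecMulVec
        ((Pi.single i 1 : Fin n → ℝ) - Pi.single j 1)
        ((Pi.single i 1 : Fin n → ℝ) - Pi.single j 1) else 0 := rfl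
  rw [hT, h1, h2, h3]
  have key : -2 * α * β * (∑ i : Fin n, ∑ j : Fin n, if i < j then lam i j * ((x i - x j) * (x i - x j)) else 0)
      + 2 * (α + β) * (∑ i : Fin n, ∑ j : Fin n, if i < j then lam i j * ((x i - x j) * (Φx i - Φx j)) else 0)
      - 2 * (∑ i : Fin n, ∑ j : Fin n, if i < j then lam i j * ((Φx i - Φx j) * (Φx i - Φx j)) else 0)
      = ∑ i : Fin n, ∑ j : Fin n, if i < j then
          lam i j * (-2 * α * β * ((x i - x j) * (x i - x j))
            + 2 * (α + β) * ((x i - x j) * (Φx i - Φx j))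
            - 2 * ((Φx i - Φx j) * (Φx i - Φx j))) else 0 := by
    rw [Finset.mul_sum, Finset.mul_sum, Finset.mul_sum, ← Finset.sum_add_distrib,
      ← Finset.sum_sub_distrib]
    refine Finset.sum_congr rfl fun i _ => ?_
    rw [Finset.mul_sum, Finset.mul_sum, Finset.mul_sum, ← Finset.sum_add_distrib,
      ← Finset.sum_sub_distrib]
    refine Finset.sum_congr rfl fun j _ => ?_
    split <;> ring
  rw [key]
  refine Finset.sum_nonneg fun i _ => Finset.sum_nonneg fun j _ => ?_
  split
  · next h =>
    have hl := hlam i j h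
    have hs := hφ (x i) (x j)
    have hΦ : Φx i - Φx j = φ (x i) - φ (x j) := rfl
    nlinarith [hs, hl]
  · exact le_refl 0
end

section
/- Global QC for ReLU: let α ≤ β and Φ(x)ᵢ = max(αxᵢ, βxᵢ) for x ∈ ℝⁿ. For any λ ∈ ℝⁿ, ν, η ∈ ℝⁿ with ν ≥ 0, η ≥ 0, and nonnegative weights λᵢⱼ (i < j), the following holds for all x ∈ ℝⁿ with y = Φ(x): Σᵢ [ −λᵢ(yᵢ−αxᵢ)(yᵢ−βxᵢ) + νᵢ(yᵢ−βxᵢ) + ηᵢ(yᵢ−αxᵢ) ] − Σ_{i<j} λᵢⱼ (yⱼ−yᵢ−α(xⱼ−xᵢ))(yⱼ−yᵢ−β(xⱼ−xᵢ)) ≥ 0. -/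
lemma relu_prod_zero (α β u : ℝ) :
    (max (α * u) (β * u) - α * u) * (max (α * u) (β * u) - β * u) = 0 := by
  rcases le_total (α * u) (β * u) with h | h
  · rw [max_eq_right h]; ring
  · rw [max_eq_left h]; ring

lemma relu_slope (α β a b : ℝ) (hab : α ≤ β) :
    (max (α * b) (β * b) - max (α * a) (β * a) - α * (b - a)) *
      (max (α * b) (β * b) - max (α * a) (β * a) - β * (b - a)) ≤ 0 := by
  rcases max_cases (α * a) (β * a) with ⟨ha, ha'⟩ | ⟨ha, ha'⟩ <;>
    rcases max_cases (α * b) (β * b) with ⟨hb, hb'⟩ | ⟨hb, hb'⟩ <;>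
      rw [ha, hb] <;> nlinarith [ha', hb', hab]

theorem relu_global_qc (n : ℕ) (α β : ℝ) (hab : α ≤ β)
    (lam ν η : Fin n → ℝ) (hν : ∀ i, 0 ≤ ν i) (hη : ∀ i, 0 ≤ η i)
    (lam2 : Fin n → Fin n → ℝ) (hlam2 : ∀ i j, i < j → 0 ≤ lam2 i j)
    (x : Fin n → ℝ) :
    let y : Fin n → ℝ := fun i => max (α * x i) (β * x i)
    0 ≤ (∑ i, (-(lam i) * ((y i - α * x i) * (y i - β * x i))
          + ν i * (y i - β * x i) + η i * (y i - α * x i)))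
        - ∑ i, ∑ j, if i < j then
            lam2 i j * ((y j - y i - α * (x j - x i)) * (y j - y i - β * (x j - x i)))
          else 0 := by
  intro y
  have hy1 : ∀ i, 0 ≤ y i - α * x i := fun i => sub_nonneg.mpr (le_max_left _ _)
  have hy2 : ∀ i, 0 ≤ y i - β * x i := fun i => sub_nonneg.mpr (le_max_right _ _)
  have hA : 0 ≤ ∑ i, (-(lam i) * ((y i - α * x i) * (y i - β * x i))
          + ν i * (y i - β * x i) + η i * (y i - α * x i)) := by
    apply Finset.sum_nonneg
    intro i _
    have h0 : (y i - α * x i) * (y i - β * x i) = 0 := relu_prod_zero α β (x i)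
    have h1 := mul_nonneg (hν i) (hy2 i)
    have h2 := mul_nonneg (hη i) (hy1 i)
    have h3 : -(lam i) * ((y i - α * x i) * (y i - β * x i)) = 0 := by rw [h0]; ring
    linarith
  have hB : (∑ i, ∑ j, if i < j then
            lam2 i j * ((y j - y i - α * (x j - x i)) * (y j - y i - β * (x j - x i)))
          else 0) ≤ 0 := by
    apply Finset.sum_nonpos
    intro i _
    apply Finset.sum_nonpos
    intro j _
    split
    · next h =>
      exact mul_nonpos_of_nonneg_of_nonpos (hlam2 i j h) (by
        have := relu_slope α β (x i) (x j) hab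
        nlinarith [this])
    · exact le_refl 0
  linarith
end

section
/- Let x̲ ≤ x̄ be real numbers (either x̲·x̄ > 0 or x̲ ≤ 0 ≤ x̄), and suppose x ∈ ℝ satisfies x̲ ≤ x ≤ x̄ with x ≠ 0. Define α = tanh(x̄)/x̄ and β = tanh(x̲)/x̲ if x̲·x̄ > 0, and α = min(tanh(x̲)/x̲, tanh(x̄)/x̄), β = 1 if x̲ ≤ 0 ≤ x̄. Then (tanh(x) − αx)(tanh(x) − βx) ≤ 0. -/
open Real Set

lemma tanh_hasDerivAt (x : ℝ) : HasDerivAt Real.tanh (1 / Real.cosh x ^ 2) x := by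
  have h : Real.tanh = fun t => Real.sinh t / Real.cosh t :=
    funext fun t => Real.tanh_eq_sinh_div_cosh t
  rw [h]
  have := (Real.hasDerivAt_sinh x).div (Real.hasDerivAt_cosh x) (Real.cosh_pos x).ne'
  refine this.congr_deriv ?_
  have := Real.cosh_sq_sub_sinh_sq x
  congr 1
  nlinarith [Real.cosh_pos x]

lemma tanh_deriv_eq : deriv Real.tanh = fun x => 1 / Real.cosh x ^ 2 :=
  funext fun x => (tanh_hasDerivAt x).deriv

lemma tanh_continuous : Continuous Real.tanh := by
  have h : Real.tanh = fun t => Real.sinh t / Real.cosh t :=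
    funext fun t => Real.tanh_eq_sinh_div_cosh t
  rw [h]
  exact Real.continuous_sinh.div Real.continuous_cosh fun t => (Real.cosh_pos t).ne'

lemma tanh_concave : StrictConcaveOn ℝ (Ici (0:ℝ)) Real.tanh := by
  apply StrictAntiOn.strictConcaveOn_of_deriv (convex_Ici 0) tanh_continuous.continuousOn
  rw [tanh_deriv_eq, interior_Ici]
  intro a ha b hb hab
  simp only [mem_Ioi] at ha hb
  have hca : 0 < Real.cosh a := Real.cosh_pos a
  have h : Real.cosh a < Real.cosh b := by
    rw [Real.cosh_lt_cosh, abs_of_pos ha, abs_of_pos hb]; exact hab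
  have : Real.cosh a ^ 2 < Real.cosh b ^ 2 := by nlinarith
  exact one_div_lt_one_div_of_lt (by positivity) this

lemma tanh_prod_key {u v : ℝ} (ha : 0 ≤ u) (hab : u ≤ v) :
    u * Real.tanh v ≤ v * Real.tanh u := by
  rcases eq_or_lt_of_le ha with rfl | ha
  · simp [Real.tanh_zero]
  rcases eq_or_lt_of_le hab with rfl | hab
  · ring_nf; exact le_refl _
  have hb : 0 < v := ha.trans hab
  have key : (1 - u/v) • Real.tanh 0 + (u/v) • Real.tanh v ≤
      Real.tanh ((1 - u/v) • (0:ℝ) + (u/v) • v) :=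
    tanh_concave.concaveOn.2 self_mem_Ici (mem_Ici.2 hb.le)
      (by have : u/v ≤ 1 := (div_le_one hb).2 hab.le; linarith)
      (by positivity) (by ring)
  simp only [smul_eq_mul, mul_zero, Real.tanh_zero, zero_add] at key
  have hcancel : u / v * v = u := div_mul_cancel₀ u hb.ne'
  rw [hcancel] at key
  have h2 : u / v * Real.tanh v ≤ Real.tanh u := by linarith
  calc u * Real.tanh v = v * (u / v * Real.tanh v) := by field_simp
    _ ≤ v * Real.tanh u := by nlinarith

lemma tanh_le_self {x : ℝ} (hx : 0 ≤ x) : Real.tanh x ≤ x := by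
  have hmono : MonotoneOn (fun t : ℝ => t * Real.cosh t - Real.sinh t) (Ici 0) := by
    apply monotoneOn_of_deriv_nonneg (convex_Ici 0)
    · exact ((continuous_id.mul Real.continuous_cosh).sub Real.continuous_sinh).continuousOn
    · intro t _
      exact (((hasDerivAt_id t).mul (Real.hasDerivAt_cosh t)).sub
        (Real.hasDerivAt_sinh t)).differentiableAt.differentiableWithinAt
    · intro t ht
      rw [interior_Ici, mem_Ioi] at ht
      have hd : HasDerivAt (fun t : ℝ => t * Real.cosh t - Real.sinh t)
          (1 * Real.cosh t + t * Real.sinh t - Real.cosh t) t :=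
        ((hasDerivAt_id t).mul (Real.hasDerivAt_cosh t)).sub (Real.hasDerivAt_sinh t)
      rw [hd.deriv]
      have : 0 ≤ Real.sinh t := by simpa using ht.le
      nlinarith
  have h0 := hmono self_mem_Ici (by exact hx : x ∈ Ici 0) hx
  simp only [Real.sinh_zero, Real.cosh_zero, mul_one, zero_mul, sub_zero, zero_sub, neg_zero] at h0
  rw [Real.tanh_eq_sinh_div_cosh, div_le_iff₀ (Real.cosh_pos x)]
  nlinarith [h0]

lemma tanh_pos {x : ℝ} (hx : 0 < x) : 0 < Real.tanh x := by
  rw [Real.tanh_eq_sinh_div_cosh]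
  exact div_pos (by simpa using hx) (Real.cosh_pos x)

lemma g_anti {a b : ℝ} (ha : 0 < a) (hab : a ≤ b) :
    Real.tanh b / b ≤ Real.tanh a / a := by
  have hb : 0 < b := lt_of_lt_of_le ha hab
  rw [div_le_div_iff₀ hb ha]
  have := tanh_prod_key ha.le hab
  linarith

lemma g_even (t : ℝ) : Real.tanh (-t) / (-t) = Real.tanh t / t := by
  rw [Real.tanh_neg, neg_div_neg_eq]

lemma g_le_one {x : ℝ} (hx : x ≠ 0) : Real.tanh x / x ≤ 1 := by
  rcases lt_or_gt_of_ne hx with h | h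
  · rw [← g_even]
    rw [div_le_one (by linarith)]
    exact tanh_le_self (by linarith)
  · rw [div_le_one h]
    exact tanh_le_self h.le

theorem tanh_local_sector (xl xu x : ℝ) (hx1 : xl ≤ x) (hx2 : x ≤ xu) (hx0 : x ≠ 0) :
    let α : ℝ := if 0 < xl * xu then Real.tanh xu / xu
                 else min (Real.tanh xl / xl) (Real.tanh xu / xu)
    let β : ℝ := if 0 < xl * xu then Real.tanh xl / xl else 1
    (Real.tanh x - α * x) * (Real.tanh x - β * x) ≤ 0 := by
  intro α β
  set g : ℝ := Real.tanh x / x with hg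
  have key : (g - α) * (g - β) ≤ 0 := by
    by_cases h : 0 < xl * xu
    · simp only [α, β, if_pos h]
      rcases mul_pos_iff.1 h with ⟨hl, hu⟩ | ⟨hl, hu⟩
      · have hx : 0 < x := hl.trans_le hx1
        have h1 : Real.tanh xu / xu ≤ g := g_anti hx hx2
        have h2 : g ≤ Real.tanh xl / xl := g_anti hl hx1
        exact mul_nonpos_of_nonneg_of_nonpos (by linarith) (by linarith)
      · have hx : x < 0 := lt_of_le_of_lt hx2 hu
        have h1 : g ≤ Real.tanh xu / xu := by
          rw [hg, ← g_even x, ← g_even xu]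
          exact g_anti (by linarith) (by linarith)
        have h2 : Real.tanh xl / xl ≤ g := by
          rw [hg, ← g_even x, ← g_even xl]
          exact g_anti (by linarith) (by linarith)
        exact mul_nonpos_of_nonpos_of_nonneg (by linarith) (by linarith)
    · simp only [α, β, if_neg h]
      push_neg at h
      have hl0 : xl ≤ 0 := by
        by_contra hc
        push_neg at hc
        nlinarith [hx1.trans hx2]
      have h1 : min (Real.tanh xl / xl) (Real.tanh xu / xu) ≤ g := by
        rcases lt_or_gt_of_ne hx0 with hx | hx
        · refine (min_le_left _ _).trans ?_
          rw [hg, ← g_even x, ← g_even xl]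
          exact g_anti (by linarith) (by linarith)
        · refine (min_le_right _ _).trans ?_
          exact g_anti hx hx2
      exact mul_nonpos_of_nonneg_of_nonpos (by linarith) (by linarith [g_le_one hx0])
  have e : Real.tanh x = g * x := (div_mul_cancel₀ _ hx0).symm
  calc (Real.tanh x - α * x) * (Real.tanh x - β * x)
      = (g - α) * (g - β) * x ^ 2 := by rw [e]; ring
    _ ≤ 0 := mul_nonpos_of_nonpos_of_nonneg key (sq_nonneg x)
end

section
/- S-procedure certificate for one-layer networks: let f(x) = W¹φ(W⁰x + b⁰) + b¹ where φ : ℝ^{n₁} → ℝ^{n₁}, and let P, Q, S be symmetric matrices such that (i) [x;1]ᵀP[x;1] ≥ 0 for all x ∈ X, (ii) [z; φ(z); 1]ᵀQ[z; φ(z); 1] ≥ 0 for all z ∈ ℝ^{n₁}, and (iii) M_in(P) + M_mid(Q) + M_out(S) ⪯ 0 (negative semidefinite), where M_in(P) = E_inᵀ P E_in, M_mid(Q) = E_midᵀ Q E_mid, M_out(S) = E_outᵀ S E_out with E_in = [[I,0,0],[0,0,1]], E_mid = [[W⁰,0,b⁰],[0,I,0],[0,0,1]], E_out = [[I,0,0],[0,W¹,b¹],[0,0,1]]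 acting on the vector (x, x¹, 1) with x¹ = φ(W⁰x + b⁰). Then for all x ∈ X, [x; f(x); 1]ᵀ S [x; f(x); 1] ≤ 0. -/
open Matrix

theorem one_layer_sdp (n0 n1 ny : ℕ)
    (W0 : Matrix (Fin n1) (Fin n0) ℝ) (b0 : Fin n1 → ℝ)
    (W1 : Matrix (Fin ny) (Fin n1) ℝ) (b1 : Fin ny → ℝ)
    (φ : (Fin n1 → ℝ) → (Fin n1 → ℝ))
    (X : Set (Fin n0 → ℝ))
    (P : Matrix (Fin n0 ⊕ Unit) (Fin n0 ⊕ Unit) ℝ)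
    (Q : Matrix ((Fin n1 ⊕ Fin n1) ⊕ Unit) ((Fin n1 ⊕ Fin n1) ⊕ Unit) ℝ)
    (S : Matrix ((Fin n0 ⊕ Fin ny) ⊕ Unit) ((Fin n0 ⊕ Fin ny) ⊕ Unit) ℝ)
    (hP : ∀ x ∈ X,
      0 ≤ (Sum.elim x fun _ : Unit => (1 : ℝ)) ⬝ᵥ (P *ᵥ Sum.elim x fun _ => 1))
    (hQ : ∀ z : Fin n1 → ℝ,
      0 ≤ (Sum.elim (Sum.elim z (φ z)) fun _ : Unit => (1 : ℝ)) ⬝ᵥ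
          (Q *ᵥ Sum.elim (Sum.elim z (φ z)) fun _ => 1))
    (hLMI : ∀ v : (Fin n0 ⊕ Fin n1) ⊕ Unit → ℝ,
      let xpart : Fin n0 → ℝ := fun i => v (Sum.inl (Sum.inl i))
      let x1part : Fin n1 → ℝ := fun i => v (Sum.inl (Sum.inr i))
      let c : ℝ := v (Sum.inr ())
      let vin : Fin n0 ⊕ Unit → ℝ := Sum.elim xpart fun _ => c
      let vmid : (Fin n1 ⊕ Fin n1) ⊕ Unit → ℝ :=
        Sum.elim (Sum.elim (fun i => (W0 *ᵥ xpart) i + c * b0 i) x1part) fun _ => c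
      let vout : (Fin n0 ⊕ Fin ny) ⊕ Unit → ℝ :=
        Sum.elim (Sum.elim xpart (fun i => (W1 *ᵥ x1part) i + c * b1 i)) fun _ => c
      vin ⬝ᵥ (P *ᵥ vin) + vmid ⬝ᵥ (Q *ᵥ vmid) + vout ⬝ᵥ (S *ᵥ vout) ≤ 0) :
    ∀ x ∈ X,
      let fx : Fin ny → ℝ := W1 *ᵥ φ (W0 *ᵥ x + b0) + b1
      (Sum.elim (Sum.elim x fx) fun _ : Unit => (1 : ℝ)) ⬝ᵥ
        (S *ᵥ Sum.elim (Sum.elim x fx) fun _ => 1) ≤ 0 := by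
  intro x hx
  intro fx
  have hL := hLMI (Sum.elim (Sum.elim x (φ (W0 *ᵥ x + b0))) fun _ => 1)
  simp only [Sum.elim_inl, Sum.elim_inr, one_mul] at hL
  have emid : (Sum.elim (Sum.elim (fun i => (W0 *ᵥ x) i + b0 i) (φ (W0 *ᵥ x + b0))) fun _ : Unit => (1:ℝ))
      = Sum.elim (Sum.elim (W0 *ᵥ x + b0) (φ (W0 *ᵥ x + b0))) fun _ => 1 := by
    funext j
    rcases j with (j | j) | j <;> simp [Pi.add_apply]
  have eout : (Sum.elim (Sum.elim x (fun i => (W1 *ᵥ φ (W0 *ᵥ x + b0)) i + b1 i)) fun _ : Unit => (1:ℝ))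
      = Sum.elim (Sum.elim x fx) fun _ => 1 := by
    funext j
    rcases j with (j | j) | j <;> simp [fx, Pi.add_apply]
  rw [emid, eout] at hL
  have h1 := hP x hx
  have h2 := hQ (W0 *ᵥ x + b0)
  linarith
end

section
/- Zonotope QC: let X = {x_c + Aλ : λ ∈ [0,1]ᵐ} ⊂ ℝⁿ with A ∈ ℝ^{n×m}, x_c ∈ ℝⁿ. Suppose P ∈ S^{n+1} and a diagonal nonnegative Γ ∈ ℝ^{m×m} satisfy [[A, x_c],[0,1]]ᵀ P [[A, x_c],[0,1]] + [[2Γ, −Γ1ₘ],[−1ₘᵀΓ, 0]] ⪰ 0. Then [x;1]ᵀ P [x;1] ≥ 0 for all x ∈ X. -/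
open Matrix

theorem zonotope_qc (n m : ℕ) (A : Matrix (Fin n) (Fin m) ℝ) (xc : Fin n → ℝ)
    (P : Matrix (Fin n ⊕ Unit) (Fin n ⊕ Unit) ℝ) (hPsymm : P.IsSymm)
    (γ : Fin m → ℝ) (hγ : ∀ i, 0 ≤ γ i)
    (hPSD :
      let M : Matrix (Fin n ⊕ Unit) (Fin m ⊕ Unit) ℝ :=
        Matrix.fromBlocks A (Matrix.of fun i (_ : Unit) => xc i)
          (Matrix.of fun (_ : Unit) _ => 0) (Matrix.of fun (_ : Unit) (_ : Unit) => 1)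
      let G : Matrix (Fin m ⊕ Unit) (Fin m ⊕ Unit) ℝ :=
        Matrix.fromBlocks ((2 : ℝ) • Matrix.diagonal γ)
          (Matrix.of fun i (_ : Unit) => -((Matrix.diagonal γ *ᵥ fun _ => 1) i))
          (Matrix.of fun (_ : Unit) j => -(((fun _ => 1) ᵥ* Matrix.diagonal γ) j))
          (Matrix.of fun (_ : Unit) (_ : Unit) => 0)
      ∀ w : Fin m ⊕ Unit → ℝ, 0 ≤ w ⬝ᵥ ((Mᵀ * P * M + G) *ᵥ w)) :
    ∀ lam : Fin m → ℝ, (∀ i, 0 ≤ lam i ∧ lam i ≤ 1) →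
      let x : Fin n → ℝ := xc + A *ᵥ lam
      0 ≤ (Sum.elim x fun _ : Unit => (1 : ℝ)) ⬝ᵥ (P *ᵥ Sum.elim x fun _ => 1) := by
  intro lam hlam
  simp only []
  set M : Matrix (Fin n ⊕ Unit) (Fin m ⊕ Unit) ℝ :=
    Matrix.fromBlocks A (Matrix.of fun i (_ : Unit) => xc i)
      (Matrix.of fun (_ : Unit) _ => 0) (Matrix.of fun (_ : Unit) (_ : Unit) => 1) with hM
  set G : Matrix (Fin m ⊕ Unit) (Fin m ⊕ Unit) ℝ :=
    Matrix.fromBlocks ((2 : ℝ) • Matrix.diagonal γ)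
      (Matrix.of fun i (_ : Unit) => -((Matrix.diagonal γ *ᵥ fun _ => 1) i))
      (Matrix.of fun (_ : Unit) j => -(((fun _ => 1) ᵥ* Matrix.diagonal γ) j))
      (Matrix.of fun (_ : Unit) (_ : Unit) => 0) with hG
  set w : Fin m ⊕ Unit → ℝ := Sum.elim lam (fun _ => (1 : ℝ)) with hw
  have h := hPSD w
  have hMw : M *ᵥ w = Sum.elim (xc + A *ᵥ lam) (fun _ => (1 : ℝ)) := by
    rw [hM, hw, Matrix.fromBlocks_mulVec]
    funext i
    cases i with
    | inl i => simp [Matrix.mulVec, dotProduct, add_comm]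
    | inr i => simp [Matrix.mulVec, dotProduct]
  have hGw : w ⬝ᵥ (G *ᵥ w) ≤ 0 := by
    rw [hG, hw, Matrix.fromBlocks_mulVec]
    simp [dotProduct, Matrix.mulVec, Fintype.sum_sum_type, Matrix.diagonal,
      Finset.mul_sum, mul_ite]
    apply Finset.sum_le_sum
    intro i _
    simp [Matrix.vecMul, dotProduct]
    have h1 := (hlam i).1
    have h2 := (hlam i).2
    nlinarith [mul_nonneg (mul_nonneg (hγ i) h1) (sub_nonneg.2 h2), hγ i]
  have key : w ⬝ᵥ ((Mᵀ * P * M + G) *ᵥ w)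
      = (M *ᵥ w) ⬝ᵥ (P *ᵥ (M *ᵥ w)) + w ⬝ᵥ (G *ᵥ w) := by
    rw [Matrix.add_mulVec, dotProduct_add, ← Matrix.mulVec_mulVec,
      ← Matrix.mulVec_mulVec, Matrix.dotProduct_mulVec w Mᵀ,
      Matrix.vecMul_transpose]
  rw [key, hMw] at h
  linarith
end
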